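/- The contraction map Spec S → Spec R, 𝔮 ↦ 𝔮 ∩ R, is surjective: every prime ideal of R = k + x·k[x,y] is the contraction of a prime ideal of S = k[x,y]. Together with the fact that U_{S/R} ≠ ∅, this shows S is a depiction of R. -/

import Mathlib

open MvPolynomial

noncomputable section

variable (k : Type*) [Field k]
variable [IsAlgClosed k]

/-- The polynomial ring `S = k[x, y]`; `x` is `X 0` and `y` is `X 1`. -/
abbrev T := MvPolynomial (Fin 2) k

/-- The subring `R = k + x·k[x,y]` of `S = k[x,y]`, consisting of all polynomials of the
form `c + x·g` with `c ∈ k` and `g ∈ S`. -/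
def Rxy : Subalgebra k (T k) where
  carrier := {f | ∃ c : k, ∃ g : T k, f = C c + X 0 * g}
  add_mem' := by
    rintro a b ⟨c₁, g₁, rfl⟩ ⟨c₂, g₂, rfl⟩
    exact ⟨c₁ + c₂, g₁ + g₂, by rw [map_add]; ring⟩
  mul_mem' := by
    rintro a b ⟨c₁, g₁, rfl⟩ ⟨c₂, g₂, rfl⟩
    exact ⟨c₁ * c₂, C c₁ * g₂ + C c₂ * g₁ + X 0 * (g₁ * g₂), by rw [map_mul]; ring⟩
  algebraMap_mem' := fun c => ⟨c, 0, by rw [algebraMap_eq]; ring⟩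

/-! The element `x` lies in the conductor of `R ⊆ S`, i.e. `xS ⊆ R`. Hence `R[1/x] = S[1/x]`, so a
prime `p` of `R` with `x ∉ p` is the contraction of `{s ∈ S | x s ∈ p}`. A prime containing `x`
contains the conductor `xS`, which is a maximal ideal of `R` because `R / xS = k`; so it is the
contraction of the prime `xS` of `S`. -/

namespace Subalgebra

variable {R S : Type*} [CommRing R] [CommRing S] [Algebra R S] {A : Subalgebra R S} {a : S}

/-- The hypothesis `ha` says that `a` lies in the conductor of `A ⊆ S`. -/
def conductorElem (ha : ∀ s, a * s ∈ A) : A := ⟨a, by simpa using ha 1⟩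

variable (ha : ∀ s, a * s ∈ A)

lemma mk_mul_coe_eq_conductorElem_mul (r : A) : (⟨a * r, ha r⟩ : A) = conductorElem ha * r := rfl

lemma mk_mul_mul_mk_mul_eq_conductorElem_mul (s t : S) :
    (⟨a * s, ha s⟩ : A) * ⟨a * t, ha t⟩ = conductorElem ha * ⟨a * (s * t), ha _⟩ :=
  Subtype.ext (by simp only [MulMemClass.mk_mul_mk, conductorElem]; ring)

def conductorLift (p : Ideal A) [p.IsPrime] (hap : conductorElem ha ∉ p) : Ideal S where
  carrier := {s | (⟨a * s, ha s⟩ : A) ∈ p}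
  zero_mem' := show (⟨a * 0, ha 0⟩ : A) ∈ p from p.mul_mem_left (conductorElem ha) p.zero_mem
  add_mem' {s t} hs ht := by
    show (⟨a * (s + t), ha _⟩ : A) ∈ p
    rw [show (⟨a * (s + t), ha _⟩ : A) = ⟨a * s, ha s⟩ + ⟨a * t, ha t⟩ from
      Subtype.ext (mul_add a s t)]
    exact p.add_mem hs ht
  smul_mem' s t ht := by
    have : conductorElem ha * ⟨a * (s * t), ha _⟩ ∈ p := by
      rw [← mk_mul_mul_mk_mul_eq_conductorElem_mul]
      exact p.mul_mem_left _ ht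
    exact (‹p.IsPrime›.mem_or_mem this).resolve_left hap

variable {p : Ideal A} [hp : p.IsPrime]

/-- If `a ∈ p`, then `p` contains the conductor ideal `aS`: `(a s)² = a · (a s²)`. -/
lemma comap_val_span_le_of_conductorElem_mem (hap : conductorElem ha ∈ p) :
    (Ideal.span {a}).comap A.val ≤ p := by
  intro r hr
  obtain ⟨s, hs⟩ := Ideal.mem_span_singleton'.mp hr
  have hr_eq : r = ⟨a * s, ha s⟩ := Subtype.ext (by simpa [mul_comm] using hs.symm)
  have hsq : r * r ∈ p := by
    rw [hr_eq, mk_mul_mul_mk_mul_eq_conductorElem_mul]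
    exact p.mul_mem_right _ hap
  exact (hp.mem_or_mem hsq).elim id id

variable (hap : conductorElem ha ∉ p)

lemma mem_conductorLift {s : S} : s ∈ conductorLift ha p hap ↔ (⟨a * s, ha s⟩ : A) ∈ p := Iff.rfl

lemma isPrime_conductorLift : (conductorLift ha p hap).IsPrime := by
  refine ⟨fun htop ↦ hap ?_, fun {s t} hst ↦ ?_⟩
  · simpa [mem_conductorLift, conductorElem] using (Ideal.eq_top_iff_one _).mp htop
  · refine hp.mem_or_mem ?_
    rw [mk_mul_mul_mk_mul_eq_conductorElem_mul]
    exact p.mul_mem_left _ hst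

lemma comap_val_conductorLift : (conductorLift ha p hap).comap A.val = p := by
  ext r
  rw [Ideal.mem_comap, mem_conductorLift, Subalgebra.coe_val, mk_mul_coe_eq_conductorElem_mul]
  exact ⟨fun h ↦ (hp.mem_or_mem h).resolve_left hap, p.mul_mem_left _⟩

end Subalgebra

section Rxy

variable {K : Type*} [Field K]

lemma X_zero_mul_mem_Rxy (g : T K) : X 0 * g ∈ Rxy K := ⟨0, g, by rw [map_zero, zero_add]⟩

lemma comap_val_span_X_zero_eq_ker :
    (Ideal.span {X 0}).comap (Rxy K).val =
      RingHom.ker (constantCoeff.comp (Rxy K).val.toRingHom) := by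
  ext ⟨f, c, g, rfl⟩
  simp only [Ideal.mem_comap, Ideal.mem_span_singleton, RingHom.mem_ker, RingHom.comp_apply,
    AlgHom.toRingHom_eq_coe, RingHom.coe_coe, Subalgebra.coe_val, map_add, map_mul,
    constantCoeff_C, constantCoeff_X, zero_mul, add_zero, dvd_add_left (dvd_mul_right _ _)]
  refine ⟨fun ⟨h, hh⟩ ↦ ?_, fun hc ↦ by rw [hc, map_zero]; exact dvd_zero _⟩
  simpa using congrArg constantCoeff hh

lemma isMaximal_comap_val_span_X_zero : ((Ideal.span {X 0}).comap (Rxy K).val).IsMaximal := by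
  rw [comap_val_span_X_zero_eq_ker]
  exact RingHom.ker_isMaximal_of_surjective _ fun c ↦ ⟨algebraMap K _ c, by simp⟩

end Rxy

/-- The contraction map `Spec S → Spec R`, `𝔮 ↦ 𝔮 ∩ R`, is surjective: every prime ideal of
`R = k + x·k[x,y]` is the contraction of a prime ideal of `S = k[x,y]`. -/
theorem stmt13 :
    ∀ p : Ideal ↥(Rxy k), p.IsPrime →
      ∃ q : Ideal (T k), q.IsPrime ∧ Ideal.comap ((Rxy k).val : ↥(Rxy k) →ₐ[k] T k) q = p := by
  intro p hp
  by_cases hx : Subalgebra.conductorElem X_zero_mul_mem_Rxy ∈ p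
  · exact ⟨_, (Ideal.span_singleton_prime (X_ne_zero 0)).mpr X_prime,
      (isMaximal_comap_val_span_X_zero.eq_of_le hp.ne_top
        (Subalgebra.comap_val_span_le_of_conductorElem_mem _ hx))⟩
  · exact ⟨_, Subalgebra.isPrime_conductorLift _ hx, Subalgebra.comap_val_conductorLift _ hx⟩

end
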